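/- arXiv:1206.4072 — 5 statements merged into one kernel-verified Lean document; each statement's English description precedes it below -/
import Mathlib

section
/- Let f : I → ℝ³ be a unit speed timelike curve on S²₁ and, for u ∈ ℝ³, let h_u(v) = ⟪f(v), u⟫. Then for all v ∈ I: h_u'(v) = ⟪t(v), u⟫; h_u''(v) = ⟪f(v) + κ_g(v)s(v), u⟫; h_u'''(v) = ⟪(1 + κ_g(v)²)t(v) + κ_g'(v)s(v), u⟫; and h_u''''(v) = ⟪(1 + κ_g(v)²)f(v) + 3κ_g(v)κ_g'(v)t(v) + (κ_g(v) + κ_g(v)³ + κ_g''(v))s(v), u⟫. -/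
noncomputable section

/-- Minkowski inner product ⟪x,y⟫ = x₁y₁ + x₂y₂ − x₃y₃ on ℝ³. -/
def mdot (x y : Fin 3 → ℝ) : ℝ := x 0 * y 0 + x 1 * y 1 - x 2 * y 2

/-- Lorentzian cross product x ×ₗ y. -/
def lcross (x y : Fin 3 → ℝ) : Fin 3 → ℝ :=
  ![x 1 * y 2 - x 2 * y 1, x 2 * y 0 - x 0 * y 2, x 1 * y 0 - x 0 * y 1]

/-- Determinant of the 3×3 matrix with rows x, y, z. -/
def det3 (x y z : Fin 3 → ℝ) : ℝ :=
  x 0 * (y 1 * z 2 - y 2 * z 1) - x 1 * (y 0 * z 2 - y 2 * z 0) + x 2 * (y 0 * z 1 - y 1 * z 0)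

/-- Minkowski norm ‖x‖ = √|⟪x,x⟫|. -/
def mnorm (x : Fin 3 → ℝ) : ℝ := Real.sqrt |mdot x x|

lemma mdot_comm (x y : Fin 3 → ℝ) : mdot x y = mdot y x := by unfold mdot; ring

lemma lcross_self (x : Fin 3 → ℝ) : lcross x x = 0 := by
  funext i; fin_cases i <;> simp [lcross] <;> ring

lemma lcross_add_right (x y z : Fin 3 → ℝ) : lcross x (y + z) = lcross x y + lcross x z := by
  funext i; fin_cases i <;> simp [lcross] <;> ring

lemma lcross_smul_right (c : ℝ) (x y : Fin 3 → ℝ) : lcross x (c • y) = c • lcross x y := by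
  funext i; fin_cases i <;> simp [lcross] <;> ring

lemma lcross_lcross (x y z : Fin 3 → ℝ) :
    lcross x (lcross y z) = mdot x y • z - mdot x z • y := by
  funext i; fin_cases i <;> simp [lcross, mdot] <;> ring

lemma mdot_lcross (x y z : Fin 3 → ℝ) : mdot (lcross x y) z = det3 x y z := by
  simp [lcross, mdot, det3]; ring

lemma lcross_anticomm (x y : Fin 3 → ℝ) : lcross x y = -lcross y x := by
  funext i; fin_cases i <;> simp [lcross] <;> ring

lemma mdot_add_left (x y z : Fin 3 → ℝ) : mdot (x + y) z = mdot x z + mdot y z := by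
  simp [mdot]; ring

lemma mdot_smul_left (c : ℝ) (x y : Fin 3 → ℝ) : mdot (c • x) y = c * mdot x y := by
  simp [mdot]; ring

lemma lTT (F T : Fin 3 → ℝ) (c : ℝ) :
    lcross T T + lcross F (F + c • lcross F T) = (c * mdot F F) • T - (c * mdot F T) • F := by
  funext i; fin_cases i <;> simp [lcross, mdot] <;> ring

/-- Frame lemma: T' = F + κ S. -/
lemma frame (F T T' : Fin 3 → ℝ) (h1 : mdot F F = 1) (h2 : mdot T T = -1)
    (h3 : mdot F T = 0) (h4 : mdot F T' = 1) (h5 : mdot T T' = 0) :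
    T' = F + det3 F T T' • lcross F T := by
  set S := lcross F T with hS
  have hSS : mdot S S = 1 := by
    rw [hS, mdot_lcross]
    simp [det3, lcross, mdot] at *
    nlinarith [h1, h2, h3]
  have hST' : mdot S T' = det3 F T T' := by rw [hS, mdot_lcross]
  have key : lcross S (lcross S T') = mdot S S • T' - mdot S T' • S := lcross_lcross S S T'
  have e1 : lcross S T' = -T := by
    rw [hS, lcross_anticomm, lcross_lcross]
    rw [mdot_comm T' F, mdot_comm T' T, h4, h5]
    simp
  have e2 : lcross S (-T) = F := by
    have h' : lcross S T = -F := by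
      rw [hS, lcross_anticomm, lcross_lcross, mdot_comm T F, h3, h2]
      simp
    have hneg : lcross S (-T) = -lcross S T := by
      have := lcross_smul_right (-1) S T; simpa using this
    rw [hneg, h', neg_neg]
  rw [e1, e2, hSS, hST'] at key
  simp at key
  exact sub_eq_iff_eq_add.mp key.symm

lemma hasDerivAt_mdot_const {X : ℝ → Fin 3 → ℝ} {X' : Fin 3 → ℝ} (u : Fin 3 → ℝ) {v : ℝ}
    (hX : HasDerivAt X X' v) :
    HasDerivAt (fun w => mdot (X w) u) (mdot X' u) v := by
  have h := fun i => hasDerivAt_pi.mp hX i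
  have H := (((h 0).mul_const (u 0)).add ((h 1).mul_const (u 1))).sub ((h 2).mul_const (u 2))
  exact H

lemma hasDerivAt_mdot₂ {X Y : ℝ → Fin 3 → ℝ} {X' Y' : Fin 3 → ℝ} {v : ℝ}
    (hX : HasDerivAt X X' v) (hY : HasDerivAt Y Y' v) :
    HasDerivAt (fun w => mdot (X w) (Y w)) (mdot X' (Y v) + mdot (X v) Y') v := by
  have hx := fun i => hasDerivAt_pi.mp hX i
  have hy := fun i => hasDerivAt_pi.mp hY i
  have H := (((hx 0).mul (hy 0)).add ((hx 1).mul (hy 1))).sub ((hx 2).mul (hy 2))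
  convert H using 1 <;> first | rfl | (funext w; simp [mdot]) | (simp [mdot]; ring)

lemma hasDerivAt_lcross {X Y : ℝ → Fin 3 → ℝ} {X' Y' : Fin 3 → ℝ} {v : ℝ}
    (hX : HasDerivAt X X' v) (hY : HasDerivAt Y Y' v) :
    HasDerivAt (fun w => lcross (X w) (Y w)) (lcross X' (Y v) + lcross (X v) Y') v := by
  have hx := fun i => hasDerivAt_pi.mp hX i
  have hy := fun i => hasDerivAt_pi.mp hY i
  rw [hasDerivAt_pi]
  intro i
  fin_cases i
  · have H := ((hx 1).mul (hy 2)).sub ((hx 2).mul (hy 1))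
    convert H using 1 <;> first | rfl | (funext w; simp [lcross]) | (simp [lcross]; ring)
  · have H := ((hx 2).mul (hy 0)).sub ((hx 0).mul (hy 2))
    convert H using 1 <;> first | rfl | (funext w; simp [lcross]) | (simp [lcross]; ring)
  · have H := ((hx 1).mul (hy 0)).sub ((hx 0).mul (hy 1))
    convert H using 1 <;> first | rfl | (funext w; simp [lcross]) | (simp [lcross]; ring)

/-- Derivatives of the spacelike height function h_u(v) = ⟪f(v),u⟫ of a unit speed
timelike curve f on S²₁. -/
theorem stmt_1 (a b : ℝ) (f : ℝ → Fin 3 → ℝ)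
    (hf : ContDiffOn ℝ (⊤ : ℕ∞) f (Set.Ioo a b))
    (hsph : ∀ v ∈ Set.Ioo a b, mdot (f v) (f v) = 1)
    (htl : ∀ v ∈ Set.Ioo a b, mdot (deriv f v) (deriv f v) = -1)
    (t s : ℝ → Fin 3 → ℝ) (kg : ℝ → ℝ)
    (ht : t = fun w => deriv f w)
    (hs : s = fun w => lcross (f w) (t w))
    (hkg : kg = fun w => det3 (f w) (t w) (deriv t w))
    (u : Fin 3 → ℝ) (h : ℝ → ℝ) (hh : h = fun w => mdot (f w) u) :
    ∀ v ∈ Set.Ioo a b,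
      deriv h v = mdot (t v) u ∧
      deriv (deriv h) v = mdot (f v + kg v • s v) u ∧
      deriv (deriv (deriv h)) v
        = mdot ((1 + kg v ^ 2) • t v + deriv kg v • s v) u ∧
      deriv (deriv (deriv (deriv h))) v
        = mdot ((1 + kg v ^ 2) • f v + (3 * kg v * deriv kg v) • t v
            + (kg v + kg v ^ 3 + deriv (deriv kg) v) • s v) u := by
  have ht' : t = deriv f := by funext w; rw [ht]
  subst ht'
  set O := Set.Ioo a b with hOdef
  have hOopen : IsOpen O := isOpen_Ioo
  -- basic smoothness facts
  have hft : ContDiffOn ℝ (⊤ : ℕ∞) (deriv f) O := hf.deriv_of_isOpen hOopen (by simp)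
  have hftt : ContDiffOn ℝ (⊤ : ℕ∞) (deriv (deriv f)) O := hft.deriv_of_isOpen hOopen (by simp)
  have Df : ∀ w ∈ O, HasDerivAt f (deriv f w) w := fun w hw =>
    ((hf.differentiableOn (by simp)).differentiableAt (hOopen.mem_nhds hw)).hasDerivAt
  have Dt : ∀ w ∈ O, HasDerivAt (deriv f) (deriv (deriv f) w) w := fun w hw =>
    ((hft.differentiableOn (by simp)).differentiableAt (hOopen.mem_nhds hw)).hasDerivAt
  -- component functions
  have compf : ∀ i, ContDiffOn ℝ (⊤ : ℕ∞) (fun w => f w i) O := fun i =>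
    (ContinuousLinearMap.proj i : (Fin 3 → ℝ) →L[ℝ] ℝ).contDiff.comp_contDiffOn hf
  have compt : ∀ i, ContDiffOn ℝ (⊤ : ℕ∞) (fun w => deriv f w i) O := fun i =>
    (ContinuousLinearMap.proj i : (Fin 3 → ℝ) →L[ℝ] ℝ).contDiff.comp_contDiffOn hft
  have comptt : ∀ i, ContDiffOn ℝ (⊤ : ℕ∞) (fun w => deriv (deriv f) w i) O := fun i =>
    (ContinuousLinearMap.proj i : (Fin 3 → ℝ) →L[ℝ] ℝ).contDiff.comp_contDiffOn hftt
  -- kg is smooth on O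
  have hkgs : ContDiffOn ℝ (⊤ : ℕ∞) kg O := by
    rw [hkg]
    exact ((((compf 0).mul (((compt 1).mul (comptt 2)).sub ((compt 2).mul (comptt 1)))).sub
      ((compf 1).mul (((compt 0).mul (comptt 2)).sub ((compt 2).mul (comptt 0))))).add
      ((compf 2).mul (((compt 0).mul (comptt 1)).sub ((compt 1).mul (comptt 0)))))
  have Dkg : ∀ w ∈ O, HasDerivAt kg (deriv kg w) w := fun w hw =>
    ((hkgs.differentiableOn (by simp)).differentiableAt (hOopen.mem_nhds hw)).hasDerivAt
  have hkgs' : ContDiffOn ℝ (⊤ : ℕ∞) (deriv kg) O := hkgs.deriv_of_isOpen hOopen (by simp)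
  have Dkg' : ∀ w ∈ O, HasDerivAt (deriv kg) (deriv (deriv kg) w) w := fun w hw =>
    ((hkgs'.differentiableOn (by simp)).differentiableAt (hOopen.mem_nhds hw)).hasDerivAt
  -- pointwise defining equations
  have hsf : ∀ w, s w = lcross (f w) (deriv f w) := fun w => by rw [hs]
  have hkgf : ∀ w, kg w = det3 (f w) (deriv f w) (deriv (deriv f) w) := fun w => by rw [hkg]
  -- orthogonality relations
  have c3 : ∀ w ∈ O, mdot (f w) (deriv f w) = 0 := by
    intro w hw
    have H := hasDerivAt_mdot₂ (Df w hw) (Df w hw)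
    have hev : (fun z => mdot (f z) (f z)) =ᶠ[nhds w] (fun _ => (1:ℝ)) :=
      Filter.eventuallyEq_of_mem (hOopen.mem_nhds hw) (fun z hz => hsph z hz)
    have hz : deriv (fun z => mdot (f z) (f z)) w = 0 := by
      rw [hev.deriv_eq]; simp
    rw [H.deriv] at hz
    have hc := mdot_comm (deriv f w) (f w)
    linarith
  have c5 : ∀ w ∈ O, mdot (deriv f w) (deriv (deriv f) w) = 0 := by
    intro w hw
    have H := hasDerivAt_mdot₂ (Dt w hw) (Dt w hw)
    have hev : (fun z => mdot (deriv f z) (deriv f z)) =ᶠ[nhds w] (fun _ => (-1:ℝ)) :=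
      Filter.eventuallyEq_of_mem (hOopen.mem_nhds hw) (fun z hz => htl z hz)
    have hz : deriv (fun z => mdot (deriv f z) (deriv f z)) w = 0 := by
      rw [hev.deriv_eq]; simp
    rw [H.deriv] at hz
    have hc := mdot_comm (deriv (deriv f) w) (deriv f w)
    linarith
  have c4 : ∀ w ∈ O, mdot (f w) (deriv (deriv f) w) = 1 := by
    intro w hw
    have H := hasDerivAt_mdot₂ (Df w hw) (Dt w hw)
    have hev : (fun z => mdot (f z) (deriv f z)) =ᶠ[nhds w] (fun _ => (0:ℝ)) :=
      Filter.eventuallyEq_of_mem (hOopen.mem_nhds hw) (fun z hz => c3 z hz)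
    have hz : deriv (fun z => mdot (f z) (deriv f z)) w = 0 := by
      rw [hev.deriv_eq]; simp
    rw [H.deriv] at hz
    have := htl w hw
    linarith
  -- Frenet equation t' = f + κ s
  have key' : ∀ w ∈ O, deriv (deriv f) w = f w + kg w • s w := by
    intro w hw
    rw [hkgf w, hsf w]
    exact frame _ _ _ (hsph w hw) (htl w hw) (c3 w hw) (c4 w hw) (c5 w hw)
  -- s' = κ t
  have Ds : ∀ w ∈ O, HasDerivAt s (kg w • deriv f w) w := by
    intro w hw
    have H := hasDerivAt_lcross (Df w hw) (Dt w hw)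
    have e : lcross (deriv f w) (deriv f w) + lcross (f w) (deriv (deriv f) w)
        = kg w • deriv f w := by
      rw [key' w hw, hsf w, lTT, hsph w hw, c3 w hw]
      simp
    rw [hs]
    exact e ▸ H
  intro v hv
  -- first derivative
  have hd1 : ∀ w ∈ O, HasDerivAt h (mdot (deriv f w) u) w := by
    rw [hh]; exact fun w hw => hasDerivAt_mdot_const u (Df w hw)
  have eq1 : ∀ w ∈ O, deriv h w = mdot (deriv f w) u := fun w hw => (hd1 w hw).deriv
  refine ⟨eq1 v hv, ?_, ?_, ?_⟩
  all_goals {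
    have hd2 : ∀ w ∈ O, HasDerivAt (fun z => mdot (deriv f z) u)
        (mdot (deriv (deriv f) w) u) w := fun w hw => hasDerivAt_mdot_const u (Dt w hw)
    have eq2 : ∀ w ∈ O, deriv (deriv h) w = mdot (f w) u + kg w * mdot (s w) u := by
      intro w hw
      have hev : deriv h =ᶠ[nhds w] (fun z => mdot (deriv f z) u) :=
        Filter.eventuallyEq_of_mem (hOopen.mem_nhds hw) (fun z hz => eq1 z hz)
      rw [hev.deriv_eq, (hd2 w hw).deriv, key' w hw, mdot_add_left, mdot_smul_left]
    have hd3 : ∀ w ∈ O, HasDerivAt (fun z => mdot (f z) u + kg z * mdot (s z) u)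
        (mdot (deriv f w) u + (deriv kg w * mdot (s w) u
          + kg w * mdot (kg w • deriv f w) u)) w := fun w hw =>
      (hasDerivAt_mdot_const u (Df w hw)).add
        ((Dkg w hw).mul (hasDerivAt_mdot_const u (Ds w hw)))
    have eq3 : ∀ w ∈ O, deriv (deriv (deriv h)) w
        = mdot (deriv f w) u + (deriv kg w * mdot (s w) u
          + kg w * (kg w * mdot (deriv f w) u)) := by
      intro w hw
      have hev : deriv (deriv h) =ᶠ[nhds w] (fun z => mdot (f z) u + kg z * mdot (s z) u) :=
        Filter.eventuallyEq_of_mem (hOopen.mem_nhds hw) (fun z hz => eq2 z hz)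
      rw [hev.deriv_eq, (hd3 w hw).deriv, mdot_smul_left]
    first
    | -- second derivative goal
      (rw [eq2 v hv, mdot_add_left, mdot_smul_left])
    | -- third derivative goal
      (rw [eq3 v hv, mdot_add_left, mdot_smul_left, mdot_smul_left]; ring)
    | -- fourth derivative goal
      (have hd4 : HasDerivAt (fun z => mdot (deriv f z) u + (deriv kg z * mdot (s z) u
            + kg z * (kg z * mdot (deriv f z) u)))
          (mdot (deriv (deriv f) v) u + ((deriv (deriv kg) v * mdot (s v) u
            + deriv kg v * mdot (kg v • deriv f v) u)
            + (deriv kg v * (kg v * mdot (deriv f v) u)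
              + kg v * (deriv kg v * mdot (deriv f v) u
                + kg v * mdot (deriv (deriv f) v) u)))) v :=
        (hasDerivAt_mdot_const u (Dt v hv)).add
          (((Dkg' v hv).mul (hasDerivAt_mdot_const u (Ds v hv))).add
            ((Dkg v hv).mul ((Dkg v hv).mul (hasDerivAt_mdot_const u (Dt v hv)))))
       have hev : deriv (deriv (deriv h)) =ᶠ[nhds v]
          (fun z => mdot (deriv f z) u + (deriv kg z * mdot (s z) u
            + kg z * (kg z * mdot (deriv f z) u))) :=
        Filter.eventuallyEq_of_mem (hOopen.mem_nhds hv) (fun z hz => eq3 z hz)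
       rw [hev.deriv_eq, hd4.deriv, key' v hv]
       simp only [mdot_add_left, mdot_smul_left]
       ring)
  }
end
end

section
/- Let f : I → ℝ³ be a unit speed timelike curve on S²₁ and h_u(v) = ⟪f(v), u⟫. For any v ∈ I and u ∈ ℝ³ with ⟪u,u⟫ = 1: h_u'(v) = 0 if and only if u lies in the real linear span of f(v) and s(v). -/
noncomputable section

/-- Cramer-type decomposition: if F, T are Minkowski-pseudo-orthonormal (spacelike,
timelike) and U is Minkowski-orthogonal to T, then U is a combination of F and
lcross F T. -/
lemma decomp (F T U : Fin 3 → ℝ) (hA : mdot F F = 1) (hB : mdot T T = -1)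
    (hC : mdot F T = 0) (hD : mdot T U = 0) (i : Fin 3) :
    mdot U F * F i + mdot U (lcross F T) * lcross F T i = U i := by
  simp only [mdot] at hA hB hC hD
  fin_cases i
  · simp [mdot, lcross]
    linear_combination (-(U 0 * (T 0 ^ 2 + T 1 ^ 2 - T 2 ^ 2))) * hA +
      (F 0 * (U 0 * F 0 + U 1 * F 1 - U 2 * F 2) - U 0) * hB +
      (U 0 * (F 0 * T 0 + F 1 * T 1 - F 2 * T 2) -
        T 0 * (U 0 * F 0 + U 1 * F 1 - U 2 * F 2)) * hC +
      (T 0 * (F 0 ^ 2 + F 1 ^ 2 - F 2 ^ 2) -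
        F 0 * (F 0 * T 0 + F 1 * T 1 - F 2 * T 2)) * hD
  · simp [mdot, lcross]
    linear_combination (-(U 1 * (T 0 ^ 2 + T 1 ^ 2 - T 2 ^ 2))) * hA +
      (F 1 * (U 0 * F 0 + U 1 * F 1 - U 2 * F 2) - U 1) * hB +
      (U 1 * (F 0 * T 0 + F 1 * T 1 - F 2 * T 2) -
        T 1 * (U 0 * F 0 + U 1 * F 1 - U 2 * F 2)) * hC +
      (T 1 * (F 0 ^ 2 + F 1 ^ 2 - F 2 ^ 2) -
        F 1 * (F 0 * T 0 + F 1 * T 1 - F 2 * T 2)) * hD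
  · simp [mdot, lcross]
    linear_combination (-(U 2 * (T 0 ^ 2 + T 1 ^ 2 - T 2 ^ 2))) * hA +
      (F 2 * (U 0 * F 0 + U 1 * F 1 - U 2 * F 2) - U 2) * hB +
      (U 2 * (F 0 * T 0 + F 1 * T 1 - F 2 * T 2) -
        T 2 * (U 0 * F 0 + U 1 * F 1 - U 2 * F 2)) * hC +
      (T 2 * (F 0 ^ 2 + F 1 ^ 2 - F 2 ^ 2) -
        F 2 * (F 0 * T 0 + F 1 * T 1 - F 2 * T 2)) * hD

/-- For a unit speed timelike curve f on S²₁ and u ∈ S²₁, h_u'(v) = 0 iff u lies in the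
real linear span of f(v) and s(v). -/
theorem stmt_2 (a b : ℝ) (f : ℝ → Fin 3 → ℝ)
    (hf : ContDiffOn ℝ (⊤ : ℕ∞) f (Set.Ioo a b))
    (hsph : ∀ v ∈ Set.Ioo a b, mdot (f v) (f v) = 1)
    (htl : ∀ v ∈ Set.Ioo a b, mdot (deriv f v) (deriv f v) = -1)
    (t s : ℝ → Fin 3 → ℝ)
    (ht : t = fun w => deriv f w)
    (hs : s = fun w => lcross (f w) (t w))
    (u : Fin 3 → ℝ) (hu : mdot u u = 1)
    (h : ℝ → ℝ) (hh : h = fun w => mdot (f w) u) :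
    ∀ v ∈ Set.Ioo a b,
      (deriv h v = 0 ↔ u ∈ Submodule.span ℝ ({f v, s v} : Set (Fin 3 → ℝ))) := by
  intro v hv
  have hmem : Set.Ioo a b ∈ nhds v := isOpen_Ioo.mem_nhds hv
  -- componentwise derivatives at points of the interval
  have hdiffAt : ∀ w ∈ Set.Ioo a b, HasDerivAt f (deriv f w) w := fun w hw =>
    (((hf.contDiffAt (isOpen_Ioo.mem_nhds hw)).differentiableAt (by simp)).hasDerivAt)
  have hcomp : ∀ w ∈ Set.Ioo a b, ∀ i, HasDerivAt (fun x => f x i) (deriv f w i) w :=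
    fun w hw => hasDerivAt_pi.mp (hdiffAt w hw)
  set F := f v with hF
  set T := deriv f v with hT
  -- deriv h v = mdot T u
  have hderivh : deriv h v = mdot T u := by
    subst hh
    have : HasDerivAt (fun w => mdot (f w) u) (T 0 * u 0 + T 1 * u 1 - T 2 * u 2) v := by
      simp only [mdot]
      exact (((hcomp v hv 0).mul_const _).add ((hcomp v hv 1).mul_const _)).sub
        ((hcomp v hv 2).mul_const _)
    rw [this.deriv]; rfl
  -- mdot F T = 0
  have hC : mdot F T = 0 := by
    have hg : HasDerivAt (fun w => mdot (f w) (f w))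
        (2 * (F 0 * T 0 + F 1 * T 1 - F 2 * T 2)) v := by
      simp only [mdot]
      have h0 := (hcomp v hv 0).mul (hcomp v hv 0)
      have h1 := (hcomp v hv 1).mul (hcomp v hv 1)
      have h2 := (hcomp v hv 2).mul (hcomp v hv 2)
      convert (h0.add h1).sub h2 using 1
      all_goals first | rfl | ring
    have heq : (fun w => mdot (f w) (f w)) =ᶠ[nhds v] (fun _ => (1:ℝ)) :=
      Filter.eventuallyEq_of_mem hmem hsph
    have : deriv (fun w => mdot (f w) (f w)) v = deriv (fun _ => (1:ℝ)) v :=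
      heq.deriv_eq
    rw [hg.deriv, deriv_const] at this
    have : F 0 * T 0 + F 1 * T 1 - F 2 * T 2 = 0 := by linarith
    simpa [mdot] using this
  have hA : mdot F F = 1 := hsph v hv
  have hB : mdot T T = -1 := htl v hv
  have hsv : s v = lcross F T := by rw [hs, ht]
  rw [hderivh, hsv]
  constructor
  · intro hD
    have hD' : mdot T u = 0 := hD
    rw [Submodule.mem_span_pair]
    refine ⟨mdot u F, mdot u (lcross F T), ?_⟩
    funext i
    have := decomp F T u hA hB hC hD' i
    simpa [Pi.add_apply, Pi.smul_apply, smul_eq_mul] using this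
  · intro hmem'
    rw [Submodule.mem_span_pair] at hmem'
    obtain ⟨p, q, hpq⟩ := hmem'
    subst hpq
    simp only [mdot, lcross, Pi.add_apply, Pi.smul_apply, smul_eq_mul,
      Matrix.cons_val_zero, Matrix.cons_val_one, Matrix.head_cons,
      Matrix.cons_val_two, Matrix.tail_cons] at hC ⊢
    linear_combination p * hC
end
end

section
/- Let f : I → ℝ³ be a unit speed timelike curve on S²₁ and h_u(v) = ⟪f(v), u⟫. For any v ∈ I and u ∈ ℝ³ with ⟪u,u⟫ = 1: h_u'(v) = h_u''(v) = h_u'''(v) = h_u''''(v) = 0 hold simultaneously if and only if u = ±(κ_g(v)f(v) − s(v))/√(κ_g(v)² + 1) and κ_g'(v) = κ_g''(v) = 0. -/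
noncomputable section

lemma lcross_apply0 (x y : Fin 3 → ℝ) : lcross x y 0 = x 1 * y 2 - x 2 * y 1 := rfl
lemma lcross_apply1 (x y : Fin 3 → ℝ) : lcross x y 1 = x 2 * y 0 - x 0 * y 2 := rfl
lemma lcross_apply2 (x y : Fin 3 → ℝ) : lcross x y 2 = x 1 * y 0 - x 0 * y 1 := rfl

lemma hasDerivAt_mdot {x y : ℝ → Fin 3 → ℝ} {x' y' : Fin 3 → ℝ} {w : ℝ}
    (hx : HasDerivAt x x' w) (hy : HasDerivAt y y' w) :
    HasDerivAt (fun w => mdot (x w) (y w)) (mdot x' (y w) + mdot (x w) y') w := by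
  have hx' := hasDerivAt_pi.mp hx
  have hy' := hasDerivAt_pi.mp hy
  have := (((hx' 0).mul (hy' 0)).add ((hx' 1).mul (hy' 1))).sub ((hx' 2).mul (hy' 2))
  refine (this : HasDerivAt (fun w => mdot (x w) (y w)) _ w).congr_deriv ?_
  simp only [mdot]; ring

lemma hasDerivAt_det3 {x y z : ℝ → Fin 3 → ℝ} {x' y' z' : Fin 3 → ℝ} {w : ℝ}
    (hx : HasDerivAt x x' w) (hy : HasDerivAt y y' w) (hz : HasDerivAt z z' w) :
    HasDerivAt (fun w => det3 (x w) (y w) (z w))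
      (det3 x' (y w) (z w) + det3 (x w) y' (z w) + det3 (x w) (y w) z') w := by
  have hx' := hasDerivAt_pi.mp hx
  have hy' := hasDerivAt_pi.mp hy
  have hz' := hasDerivAt_pi.mp hz
  have := (((hx' 0).mul (((hy' 1).mul (hz' 2)).sub ((hy' 2).mul (hz' 1)))).sub
    ((hx' 1).mul (((hy' 0).mul (hz' 2)).sub ((hy' 2).mul (hz' 0))))).add
    ((hx' 2).mul (((hy' 0).mul (hz' 1)).sub ((hy' 1).mul (hz' 0))))
  refine (this : HasDerivAt (fun w => det3 (x w) (y w) (z w)) _ w).congr_deriv ?_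
  simp only [det3, Pi.mul_apply, Pi.sub_apply]; ring

lemma mdot_lcross_s5 (F T w : Fin 3 → ℝ) : mdot w (lcross F T) = det3 F T w := by
  simp only [mdot, det3, lcross_apply0, lcross_apply1, lcross_apply2]; ring

lemma decomp0 (F T : Fin 3 → ℝ) (h1 : mdot F F = 1) (h2 : mdot T T = -1)
    (h3 : mdot F T = 0) (u : Fin 3 → ℝ) :
    u 0 = mdot u F * F 0 - mdot u T * T 0 + mdot u (lcross F T) * lcross F T 0 := by
  simp only [mdot, lcross_apply0, lcross_apply1, lcross_apply2] at h1 h2 h3 ⊢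
  linear_combination (-(u 0 * T 0 + u 1 * T 1 - u 2 * T 2) * T 0 + (T 0 * T 0 + T 1 * T 1 - T 2 * T 2) * u 0) * h1 + (-(u 0 * F 0 + u 1 * F 1 - u 2 * F 2) * F 0 + u 0) * h2 + ((u 0 * T 0 + u 1 * T 1 - u 2 * T 2) * F 0 + (u 0 * F 0 + u 1 * F 1 - u 2 * F 2) * T 0 - (F 0 * T 0 + F 1 * T 1 - F 2 * T 2) * u 0) * h3

lemma decomp1 (F T : Fin 3 → ℝ) (h1 : mdot F F = 1) (h2 : mdot T T = -1)
    (h3 : mdot F T = 0) (u : Fin 3 → ℝ) :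
    u 1 = mdot u F * F 1 - mdot u T * T 1 + mdot u (lcross F T) * lcross F T 1 := by
  simp only [mdot, lcross_apply0, lcross_apply1, lcross_apply2] at h1 h2 h3 ⊢
  linear_combination (-(u 0 * T 0 + u 1 * T 1 - u 2 * T 2) * T 1 + (T 0 * T 0 + T 1 * T 1 - T 2 * T 2) * u 1) * h1 + (-(u 0 * F 0 + u 1 * F 1 - u 2 * F 2) * F 1 + u 1) * h2 + ((u 0 * T 0 + u 1 * T 1 - u 2 * T 2) * F 1 + (u 0 * F 0 + u 1 * F 1 - u 2 * F 2) * T 1 - (F 0 * T 0 + F 1 * T 1 - F 2 * T 2) * u 1) * h3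

lemma decomp2 (F T : Fin 3 → ℝ) (h1 : mdot F F = 1) (h2 : mdot T T = -1)
    (h3 : mdot F T = 0) (u : Fin 3 → ℝ) :
    u 2 = mdot u F * F 2 - mdot u T * T 2 + mdot u (lcross F T) * lcross F T 2 := by
  simp only [mdot, lcross_apply0, lcross_apply1, lcross_apply2] at h1 h2 h3 ⊢
  linear_combination (-(u 0 * T 0 + u 1 * T 1 - u 2 * T 2) * T 2 + (T 0 * T 0 + T 1 * T 1 - T 2 * T 2) * u 2) * h1 + (-(u 0 * F 0 + u 1 * F 1 - u 2 * F 2) * F 2 + u 2) * h2 + ((u 0 * T 0 + u 1 * T 1 - u 2 * T 2) * F 2 + (u 0 * F 0 + u 1 * F 1 - u 2 * F 2) * T 2 - (F 0 * T 0 + F 1 * T 1 - F 2 * T 2) * u 2) * h3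


lemma SS_eq (F T : Fin 3 → ℝ) (hFF : mdot F F = 1) (hTT : mdot T T = -1)
    (hFT : mdot F T = 0) : mdot (lcross F T) (lcross F T) = 1 := by
  simp only [mdot, lcross_apply0, lcross_apply1, lcross_apply2] at hFF hTT hFT ⊢
  linear_combination (F 0 * T 0 + F 1 * T 1 - F 2 * T 2) * hFT -
    (T 0 * T 0 + T 1 * T 1 - T 2 * T 2) * hFF - hTT

lemma key (F T D2 D3 D4 u : Fin 3 → ℝ)
    (hFF : mdot F F = 1) (hTT : mdot T T = -1) (hFT : mdot F T = 0)
    (hD2F : mdot D2 F = 1) (hD2T : mdot D2 T = 0)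
    (hD3F : mdot D3 F = 0) (hD3T : mdot D3 T + mdot D2 D2 = 0)
    (hD4F : mdot D4 F = mdot D2 D2) (hD4T : mdot D4 T + 3 * mdot D3 D2 = 0)
    (hu : mdot u u = 1) (κ κ₁ κ₂ : ℝ)
    (hκ : κ = det3 F T D2) (hκ₁ : κ₁ = det3 F T D3)
    (hκ₂ : κ₂ = det3 F D2 D3 + det3 F T D4) :
    (mdot T u = 0 ∧ mdot D2 u = 0 ∧ mdot D3 u = 0 ∧ mdot D4 u = 0) ↔
    ((u = (Real.sqrt (κ ^ 2 + 1))⁻¹ • (κ • F - lcross F T) ∨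
      u = -((Real.sqrt (κ ^ 2 + 1))⁻¹ • (κ • F - lcross F T))) ∧ κ₁ = 0 ∧ κ₂ = 0) := by
  set S := lcross F T with hSdef
  -- Gram facts
  have hFS : mdot F S = 0 := by
    rw [hSdef]; simp only [mdot, lcross_apply0, lcross_apply1, lcross_apply2]; ring
  have hTS : mdot T S = 0 := by
    rw [hSdef]; simp only [mdot, lcross_apply0, lcross_apply1, lcross_apply2]; ring
  have hSS : mdot S S = 1 := by rw [hSdef]; exact SS_eq F T hFF hTT hFT
  have hdetFTS : det3 F T S = 1 := by
    rw [hSdef, ← mdot_lcross_s5, ← hSdef]; exact hSS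
  -- unfolded copies
  have hFF' := hFF; have hTT' := hTT; have hFT' := hFT
  have hFS' := hFS; have hTS' := hTS; have hSS' := hSS
  have hdetFTS' := hdetFTS
  simp only [mdot] at hFF' hTT' hFT' hFS' hTS' hSS'
  simp only [det3] at hdetFTS'
  -- inner products with S via determinant
  have hD2S : mdot D2 S = κ := by rw [hSdef, mdot_lcross_s5]; exact hκ.symm
  have hD3S : mdot D3 S = κ₁ := by rw [hSdef, mdot_lcross_s5]; exact hκ₁.symm
  -- decomposition of D2
  have d20 : D2 0 = F 0 + κ * S 0 := by
    have h := decomp0 F T hFF hTT hFT D2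
    rw [← hSdef, hD2F, hD2T, hD2S] at h; linear_combination h
  have d21 : D2 1 = F 1 + κ * S 1 := by
    have h := decomp1 F T hFF hTT hFT D2
    rw [← hSdef, hD2F, hD2T, hD2S] at h; linear_combination h
  have d22 : D2 2 = F 2 + κ * S 2 := by
    have h := decomp2 F T hFF hTT hFT D2
    rw [← hSdef, hD2F, hD2T, hD2S] at h; linear_combination h
  have hD2D2 : mdot D2 D2 = κ ^ 2 + 1 := by
    simp only [mdot]; rw [d20, d21, d22]
    linear_combination hFF' + (2 * κ) * hFS' + κ ^ 2 * hSS'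
  -- decomposition of D3
  have hD3T2 : mdot D3 T = -(κ ^ 2 + 1) := by rw [hD2D2] at hD3T; linarith
  have d30 : D3 0 = (κ ^ 2 + 1) * T 0 + κ₁ * S 0 := by
    have h := decomp0 F T hFF hTT hFT D3
    rw [← hSdef, hD3F, hD3T2, hD3S] at h; linear_combination h
  have d31 : D3 1 = (κ ^ 2 + 1) * T 1 + κ₁ * S 1 := by
    have h := decomp1 F T hFF hTT hFT D3
    rw [← hSdef, hD3F, hD3T2, hD3S] at h; linear_combination h
  have d32 : D3 2 = (κ ^ 2 + 1) * T 2 + κ₁ * S 2 := by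
    have h := decomp2 F T hFF hTT hFT D3
    rw [← hSdef, hD3F, hD3T2, hD3S] at h; linear_combination h
  have hD3D2 : mdot D3 D2 = κ * κ₁ := by
    simp only [mdot]; rw [d30, d31, d32, d20, d21, d22]
    linear_combination (κ ^ 2 + 1) * hFT' + ((κ ^ 2 + 1) * κ) * hTS' + κ₁ * hFS' +
      (κ * κ₁) * hSS'
  -- decomposition of D4
  have hD4F2 : mdot D4 F = κ ^ 2 + 1 := hD4F.trans hD2D2
  have hD4T2 : mdot D4 T = -(3 * (κ * κ₁)) := by rw [hD3D2] at hD4T; linarith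
  have hdetFD2D3 : det3 F D2 D3 = -(κ * (κ ^ 2 + 1)) := by
    simp only [det3]; rw [d20, d21, d22, d30, d31, d32]
    linear_combination (-(κ * (κ ^ 2 + 1))) * hdetFTS'
  have hD4S : mdot D4 S = κ₂ + κ * (κ ^ 2 + 1) := by
    have h2 : mdot D4 S = det3 F T D4 := by rw [hSdef, mdot_lcross_s5]
    rw [h2]; rw [hdetFD2D3] at hκ₂; linarith
  have d40 : D4 0 = (κ ^ 2 + 1) * F 0 + 3 * (κ * κ₁) * T 0 + (κ₂ + κ * (κ ^ 2 + 1)) * S 0 := by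
    have h := decomp0 F T hFF hTT hFT D4
    rw [← hSdef, hD4F2, hD4T2, hD4S] at h; linear_combination h
  have d41 : D4 1 = (κ ^ 2 + 1) * F 1 + 3 * (κ * κ₁) * T 1 + (κ₂ + κ * (κ ^ 2 + 1)) * S 1 := by
    have h := decomp1 F T hFF hTT hFT D4
    rw [← hSdef, hD4F2, hD4T2, hD4S] at h; linear_combination h
  have d42 : D4 2 = (κ ^ 2 + 1) * F 2 + 3 * (κ * κ₁) * T 2 + (κ₂ + κ * (κ ^ 2 + 1)) * S 2 := by
    have h := decomp2 F T hFF hTT hFT D4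
    rw [← hSdef, hD4F2, hD4T2, hD4S] at h; linear_combination h
  -- the four inner products with u
  have hTu : mdot T u = mdot u T := by simp only [mdot]; ring
  have hD2u : mdot D2 u = mdot u F + κ * mdot u S := by
    simp only [mdot]; rw [d20, d21, d22]; ring
  have hD3u : mdot D3 u = (κ ^ 2 + 1) * mdot u T + κ₁ * mdot u S := by
    simp only [mdot]; rw [d30, d31, d32]; ring
  have hD4u : mdot D4 u = (κ ^ 2 + 1) * mdot u F + 3 * (κ * κ₁) * mdot u T +
      (κ₂ + κ * (κ ^ 2 + 1)) * mdot u S := by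
    simp only [mdot]; rw [d40, d41, d42]; ring
  -- decomposition of u and norm identity
  have hu0 : u 0 = mdot u F * F 0 - mdot u T * T 0 + mdot u S * S 0 := by
    have h := decomp0 F T hFF hTT hFT u; rw [← hSdef] at h; exact h
  have hu1 : u 1 = mdot u F * F 1 - mdot u T * T 1 + mdot u S * S 1 := by
    have h := decomp1 F T hFF hTT hFT u; rw [← hSdef] at h; exact h
  have hu2 : u 2 = mdot u F * F 2 - mdot u T * T 2 + mdot u S * S 2 := by
    have h := decomp2 F T hFF hTT hFT u; rw [← hSdef] at h; exact h
  have hABC : mdot u F ^ 2 - mdot u T ^ 2 + mdot u S ^ 2 = 1 := by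
    have hu' := hu
    simp only [mdot] at hu'
    rw [hu0, hu1, hu2] at hu'
    linear_combination hu' - (mdot u F) ^ 2 * hFF' - (mdot u T) ^ 2 * hTT' -
      (mdot u S) ^ 2 * hSS' + (2 * mdot u F * mdot u T) * hFT' -
      (2 * mdot u F * mdot u S) * hFS' + (2 * mdot u T * mdot u S) * hTS'
  -- square root facts
  have hpos : (0 : ℝ) < κ ^ 2 + 1 := by positivity
  have hr2 : Real.sqrt (κ ^ 2 + 1) ^ 2 = κ ^ 2 + 1 := Real.sq_sqrt (le_of_lt hpos)
  have hrpos : 0 < Real.sqrt (κ ^ 2 + 1) := Real.sqrt_pos.mpr hpos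
  have hrne : Real.sqrt (κ ^ 2 + 1) ≠ 0 := ne_of_gt hrpos
  set r := Real.sqrt (κ ^ 2 + 1) with hrdef
  constructor
  · rintro ⟨e1, e2, e3, e4⟩
    rw [hTu] at e1
    rw [hD2u] at e2
    rw [hD3u] at e3
    rw [hD4u] at e4
    have hk1C : κ₁ * mdot u S = 0 := by rw [e1] at e3; linarith
    have hk2C : κ₂ * mdot u S = 0 := by
      linear_combination e4 - (κ ^ 2 + 1) * e2 - (3 * (κ * κ₁)) * e1
    have hC2 : (κ ^ 2 + 1) * mdot u S ^ 2 = 1 := by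
      linear_combination hABC - (mdot u F - κ * mdot u S) * e2 + (mdot u T) * e1
    have hCne : mdot u S ≠ 0 := by
      intro h0; rw [h0] at hC2; norm_num at hC2
    have hk1 : κ₁ = 0 := by
      rcases mul_eq_zero.mp hk1C with h | h
      · exact h
      · exact absurd h hCne
    have hk2 : κ₂ = 0 := by
      rcases mul_eq_zero.mp hk2C with h | h
      · exact h
      · exact absurd h hCne
    refine ⟨?_, hk1, hk2⟩
    have hrC : (r * mdot u S - 1) * (r * mdot u S + 1) = 0 := by
      linear_combination (mdot u S) ^ 2 * hr2 + hC2
    rcases mul_eq_zero.mp hrC with hc | hc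
    · -- C = r⁻¹ ; u = -(r⁻¹ • (κ • F - S))
      have hCval : mdot u S = r⁻¹ := by
        field_simp
        linarith
      have hAval : mdot u F = -(κ * r⁻¹) := by rw [hCval] at e2; linarith
      have c0 : u 0 = -(r⁻¹ * (κ * F 0 - S 0)) := by
        rw [hu0, hAval, e1, hCval]; ring
      have c1 : u 1 = -(r⁻¹ * (κ * F 1 - S 1)) := by
        rw [hu1, hAval, e1, hCval]; ring
      have c2 : u 2 = -(r⁻¹ * (κ * F 2 - S 2)) := by
        rw [hu2, hAval, e1, hCval]; ring
      right
      funext i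
      simp only [Pi.neg_apply, Pi.smul_apply, Pi.sub_apply, smul_eq_mul]
      fin_cases i
      · exact c0
      · exact c1
      · exact c2
    · -- C = -r⁻¹ ; u = r⁻¹ • (κ • F - S)
      have hCval : mdot u S = -r⁻¹ := by
        field_simp
        linarith
      have hAval : mdot u F = κ * r⁻¹ := by rw [hCval] at e2; linarith
      have c0 : u 0 = r⁻¹ * (κ * F 0 - S 0) := by
        rw [hu0, hAval, e1, hCval]; ring
      have c1 : u 1 = r⁻¹ * (κ * F 1 - S 1) := by
        rw [hu1, hAval, e1, hCval]; ring
      have c2 : u 2 = r⁻¹ * (κ * F 2 - S 2) := by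
        rw [hu2, hAval, e1, hCval]; ring
      left
      funext i
      simp only [Pi.smul_apply, Pi.sub_apply, smul_eq_mul]
      fin_cases i
      · exact c0
      · exact c1
      · exact c2
  · rintro ⟨hor, hk1, hk2⟩
    rcases hor with hor | hor
    · have hA : mdot u F = r⁻¹ * κ := by
        rw [hor]; simp only [mdot, Pi.smul_apply, Pi.sub_apply, smul_eq_mul]
        linear_combination (r⁻¹ * κ) * hFF' - r⁻¹ * hFS'
      have hB : mdot u T = 0 := by
        rw [hor]; simp only [mdot, Pi.smul_apply, Pi.sub_apply, smul_eq_mul]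
        linear_combination (r⁻¹ * κ) * hFT' - r⁻¹ * hTS'
      have hC : mdot u S = -r⁻¹ := by
        rw [hor]; simp only [mdot, Pi.smul_apply, Pi.sub_apply, smul_eq_mul]
        linear_combination (r⁻¹ * κ) * hFS' - r⁻¹ * hSS'
      refine ⟨?_, ?_, ?_, ?_⟩
      · rw [hTu, hB]
      · rw [hD2u, hA, hC]; ring
      · rw [hD3u, hB, hC, hk1]; ring
      · rw [hD4u, hA, hB, hC, hk1, hk2]; ring
    · have hA : mdot u F = -(r⁻¹ * κ) := by
        rw [hor]
        simp only [mdot, Pi.neg_apply, Pi.smul_apply, Pi.sub_apply, smul_eq_mul]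
        linear_combination (-(r⁻¹ * κ)) * hFF' + r⁻¹ * hFS'
      have hB : mdot u T = 0 := by
        rw [hor]
        simp only [mdot, Pi.neg_apply, Pi.smul_apply, Pi.sub_apply, smul_eq_mul]
        linear_combination (-(r⁻¹ * κ)) * hFT' + r⁻¹ * hTS'
      have hC : mdot u S = r⁻¹ := by
        rw [hor]
        simp only [mdot, Pi.neg_apply, Pi.smul_apply, Pi.sub_apply, smul_eq_mul]
        linear_combination (-(r⁻¹ * κ)) * hFS' + r⁻¹ * hSS'
      refine ⟨?_, ?_, ?_, ?_⟩
      · rw [hTu, hB]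
      · rw [hD2u, hA, hC]; ring
      · rw [hD3u, hB, hC, hk1]; ring
      · rw [hD4u, hA, hB, hC, hk1, hk2]; ring


/-- For a unit speed timelike curve f on S²₁ and u ∈ S²₁,
h_u'(v) = h_u''(v) = h_u'''(v) = h_u''''(v) = 0 iff
u = ±(κ_g(v)f(v) − s(v))/√(κ_g(v)² + 1) and κ_g'(v) = κ_g''(v) = 0. -/
theorem stmt_5 (a b : ℝ) (f : ℝ → Fin 3 → ℝ)
    (hf : ContDiffOn ℝ (⊤ : ℕ∞) f (Set.Ioo a b))
    (hsph : ∀ v ∈ Set.Ioo a b, mdot (f v) (f v) = 1)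
    (htl : ∀ v ∈ Set.Ioo a b, mdot (deriv f v) (deriv f v) = -1)
    (t s : ℝ → Fin 3 → ℝ) (kg : ℝ → ℝ)
    (ht : t = fun w => deriv f w)
    (hs : s = fun w => lcross (f w) (t w))
    (hkg : kg = fun w => det3 (f w) (t w) (deriv t w))
    (u : Fin 3 → ℝ) (hu : mdot u u = 1)
    (h : ℝ → ℝ) (hh : h = fun w => mdot (f w) u) :
    ∀ v ∈ Set.Ioo a b,
      ((deriv h v = 0 ∧ deriv (deriv h) v = 0 ∧ deriv (deriv (deriv h)) v = 0 ∧
          deriv (deriv (deriv (deriv h))) v = 0) ↔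
        ((u = (Real.sqrt (kg v ^ 2 + 1))⁻¹ • (kg v • f v - s v) ∨
          u = -((Real.sqrt (kg v ^ 2 + 1))⁻¹ • (kg v • f v - s v))) ∧
         deriv kg v = 0 ∧ deriv (deriv kg) v = 0)) := by
  intro v hv
  have hO : IsOpen (Set.Ioo a b) := isOpen_Ioo
  set f1 := deriv f with hf1def
  set f2 := deriv f1 with hf2def
  set f3 := deriv f2 with hf3def
  set f4 := deriv f3 with hf4def
  have hkg' : kg = fun w => det3 (f w) (f1 w) (f2 w) := by
    rw [hkg, ht]
  have hs' : s v = lcross (f v) (f1 v) := by rw [hs, ht]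
  have hf1C : ContDiffOn ℝ (⊤ : ℕ∞) f1 (Set.Ioo a b) := hf.deriv_of_isOpen hO (by simp)
  have hf2C : ContDiffOn ℝ (⊤ : ℕ∞) f2 (Set.Ioo a b) := hf1C.deriv_of_isOpen hO (by simp)
  have hf3C : ContDiffOn ℝ (⊤ : ℕ∞) f3 (Set.Ioo a b) := hf2C.deriv_of_isOpen hO (by simp)
  have hd0 : ∀ w ∈ Set.Ioo a b, HasDerivAt f (f1 w) w := fun w hw =>
    ((hf.differentiableOn (by simp)).differentiableAt (hO.mem_nhds hw)).hasDerivAt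
  have hd1 : ∀ w ∈ Set.Ioo a b, HasDerivAt f1 (f2 w) w := fun w hw =>
    ((hf1C.differentiableOn (by simp)).differentiableAt (hO.mem_nhds hw)).hasDerivAt
  have hd2 : ∀ w ∈ Set.Ioo a b, HasDerivAt f2 (f3 w) w := fun w hw =>
    ((hf2C.differentiableOn (by simp)).differentiableAt (hO.mem_nhds hw)).hasDerivAt
  have hd3 : ∀ w ∈ Set.Ioo a b, HasDerivAt f3 (f4 w) w := fun w hw =>
    ((hf3C.differentiableOn (by simp)).differentiableAt (hO.mem_nhds hw)).hasDerivAt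
  -- helper: derivative of a function constant on Ioo is zero
  have hz : ∀ (G : ℝ → ℝ) (c : ℝ), (∀ w ∈ Set.Ioo a b, G w = c) →
      ∀ (w : ℝ) (E : ℝ), w ∈ Set.Ioo a b → HasDerivAt G E w → E = 0 := by
    intro G c hG w E hw hd
    have h1 : deriv G w = deriv (fun _ => c) w :=
      Filter.EventuallyEq.deriv_eq (Filter.eventuallyEq_of_mem (hO.mem_nhds hw) hG)
    rw [deriv_const] at h1
    exact hd.deriv.symm.trans h1
  have hcongr : ∀ (G E : ℝ → ℝ), (∀ w ∈ Set.Ioo a b, G w = E w) →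
      ∀ w ∈ Set.Ioo a b, deriv G w = deriv E w := fun G E hGE w hw =>
    Filter.EventuallyEq.deriv_eq (Filter.eventuallyEq_of_mem (hO.mem_nhds hw) hGE)
  -- identity chains from the sphere and timelike conditions
  have P1 : ∀ w ∈ Set.Ioo a b, mdot (f1 w) (f w) + mdot (f w) (f1 w) = 0 := fun w hw =>
    hz _ 1 hsph w _ hw (hasDerivAt_mdot (hd0 w hw) (hd0 w hw))
  have P2 : ∀ w ∈ Set.Ioo a b,
      mdot (f2 w) (f w) + mdot (f1 w) (f1 w) + (mdot (f1 w) (f1 w) + mdot (f w) (f2 w)) = 0 :=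
    fun w hw => hz _ 0 P1 w _ hw
      ((hasDerivAt_mdot (hd1 w hw) (hd0 w hw)).add (hasDerivAt_mdot (hd0 w hw) (hd1 w hw)))
  have P3 : ∀ w ∈ Set.Ioo a b,
      mdot (f3 w) (f w) + mdot (f2 w) (f1 w) + (mdot (f2 w) (f1 w) + mdot (f1 w) (f2 w)) +
        (mdot (f2 w) (f1 w) + mdot (f1 w) (f2 w) + (mdot (f1 w) (f2 w) + mdot (f w) (f3 w))) = 0 :=
    fun w hw => hz _ 0 P2 w _ hw
      (((hasDerivAt_mdot (hd2 w hw) (hd0 w hw)).add (hasDerivAt_mdot (hd1 w hw) (hd1 w hw))).add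
        ((hasDerivAt_mdot (hd1 w hw) (hd1 w hw)).add (hasDerivAt_mdot (hd0 w hw) (hd2 w hw))))
  have P4 : mdot (f4 v) (f v) + mdot (f3 v) (f1 v) + (mdot (f3 v) (f1 v) + mdot (f2 v) (f2 v)) +
      (mdot (f3 v) (f1 v) + mdot (f2 v) (f2 v) + (mdot (f2 v) (f2 v) + mdot (f1 v) (f3 v))) +
      (mdot (f3 v) (f1 v) + mdot (f2 v) (f2 v) + (mdot (f2 v) (f2 v) + mdot (f1 v) (f3 v)) +
        (mdot (f2 v) (f2 v) + mdot (f1 v) (f3 v) + (mdot (f1 v) (f3 v) + mdot (f v) (f4 v)))) = 0 :=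
    hz _ 0 P3 v _ hv
      ((((hasDerivAt_mdot (hd3 v hv) (hd0 v hv)).add (hasDerivAt_mdot (hd2 v hv) (hd1 v hv))).add
        ((hasDerivAt_mdot (hd2 v hv) (hd1 v hv)).add (hasDerivAt_mdot (hd1 v hv) (hd2 v hv)))).add
        (((hasDerivAt_mdot (hd2 v hv) (hd1 v hv)).add (hasDerivAt_mdot (hd1 v hv) (hd2 v hv))).add
          ((hasDerivAt_mdot (hd1 v hv) (hd2 v hv)).add (hasDerivAt_mdot (hd0 v hv) (hd3 v hv)))))
  have Q1 : ∀ w ∈ Set.Ioo a b, mdot (f2 w) (f1 w) + mdot (f1 w) (f2 w) = 0 := fun w hw =>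
    hz _ (-1) htl w _ hw (hasDerivAt_mdot (hd1 w hw) (hd1 w hw))
  have Q2 : ∀ w ∈ Set.Ioo a b,
      mdot (f3 w) (f1 w) + mdot (f2 w) (f2 w) + (mdot (f2 w) (f2 w) + mdot (f1 w) (f3 w)) = 0 :=
    fun w hw => hz _ 0 Q1 w _ hw
      ((hasDerivAt_mdot (hd2 w hw) (hd1 w hw)).add (hasDerivAt_mdot (hd1 w hw) (hd2 w hw)))
  have Q3 : mdot (f4 v) (f1 v) + mdot (f3 v) (f2 v) + (mdot (f3 v) (f2 v) + mdot (f2 v) (f3 v)) +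
      (mdot (f3 v) (f2 v) + mdot (f2 v) (f3 v) + (mdot (f2 v) (f3 v) + mdot (f1 v) (f4 v))) = 0 :=
    hz _ 0 Q2 v _ hv
      (((hasDerivAt_mdot (hd3 v hv) (hd1 v hv)).add (hasDerivAt_mdot (hd2 v hv) (hd2 v hv))).add
        ((hasDerivAt_mdot (hd2 v hv) (hd2 v hv)).add (hasDerivAt_mdot (hd1 v hv) (hd3 v hv))))
  -- derivatives of the height function
  have hH1 : ∀ w ∈ Set.Ioo a b, HasDerivAt h (mdot (f1 w) u) w := by
    intro w hw
    rw [hh]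
    have := hasDerivAt_mdot (hd0 w hw) (hasDerivAt_const w u)
    convert this using 1
    simp [mdot]
  have hH2 : ∀ w ∈ Set.Ioo a b,
      HasDerivAt (fun w => mdot (f1 w) u) (mdot (f2 w) u) w := by
    intro w hw
    have := hasDerivAt_mdot (hd1 w hw) (hasDerivAt_const w u)
    convert this using 1
    simp [mdot]
  have hH3 : ∀ w ∈ Set.Ioo a b,
      HasDerivAt (fun w => mdot (f2 w) u) (mdot (f3 w) u) w := by
    intro w hw
    have := hasDerivAt_mdot (hd2 w hw) (hasDerivAt_const w u)
    convert this using 1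
    simp [mdot]
  have hH4 : ∀ w ∈ Set.Ioo a b,
      HasDerivAt (fun w => mdot (f3 w) u) (mdot (f4 w) u) w := by
    intro w hw
    have := hasDerivAt_mdot (hd3 w hw) (hasDerivAt_const w u)
    convert this using 1
    simp [mdot]
  have e1 : ∀ w ∈ Set.Ioo a b, deriv h w = mdot (f1 w) u := fun w hw => (hH1 w hw).deriv
  have e2 : ∀ w ∈ Set.Ioo a b, deriv (deriv h) w = mdot (f2 w) u := fun w hw =>
    (hcongr _ _ e1 w hw).trans (hH2 w hw).deriv
  have e3 : ∀ w ∈ Set.Ioo a b, deriv (deriv (deriv h)) w = mdot (f3 w) u := fun w hw =>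
    (hcongr _ _ e2 w hw).trans (hH3 w hw).deriv
  have e4 : deriv (deriv (deriv (deriv h))) v = mdot (f4 v) u :=
    (hcongr _ _ e3 v hv).trans (hH4 v hv).deriv
  -- derivatives of the geodesic curvature
  have hkgd : ∀ w ∈ Set.Ioo a b, HasDerivAt kg
      (det3 (f1 w) (f1 w) (f2 w) + det3 (f w) (f2 w) (f2 w) + det3 (f w) (f1 w) (f3 w)) w := by
    intro w hw
    rw [hkg']
    exact hasDerivAt_det3 (hd0 w hw) (hd1 w hw) (hd2 w hw)
  have ek1 : ∀ w ∈ Set.Ioo a b, deriv kg w =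
      det3 (f1 w) (f1 w) (f2 w) + det3 (f w) (f2 w) (f2 w) + det3 (f w) (f1 w) (f3 w) :=
    fun w hw => (hkgd w hw).deriv
  have ek2 : deriv (deriv kg) v =
      det3 (f2 v) (f1 v) (f2 v) + det3 (f1 v) (f2 v) (f2 v) + det3 (f1 v) (f1 v) (f3 v) +
      (det3 (f1 v) (f2 v) (f2 v) + det3 (f v) (f3 v) (f2 v) + det3 (f v) (f2 v) (f3 v)) +
      (det3 (f1 v) (f1 v) (f3 v) + det3 (f v) (f2 v) (f3 v) + det3 (f v) (f1 v) (f4 v)) :=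
    (hcongr _ _ ek1 v hv).trans
      (((hasDerivAt_det3 (hd1 v hv) (hd1 v hv) (hd2 v hv)).add
        (hasDerivAt_det3 (hd0 v hv) (hd2 v hv) (hd2 v hv))).add
        (hasDerivAt_det3 (hd0 v hv) (hd1 v hv) (hd3 v hv))).deriv
  -- scalar constraints at v
  have hFF : mdot (f v) (f v) = 1 := hsph v hv
  have hTT : mdot (f1 v) (f1 v) = -1 := htl v hv
  have hFT : mdot (f v) (f1 v) = 0 := by
    have p1 := P1 v hv; simp only [mdot] at p1 ⊢; linarith
  have hD2F : mdot (f2 v) (f v) = 1 := by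
    have p2 := P2 v hv; have tt := htl v hv
    simp only [mdot] at p2 tt ⊢; linarith
  have hD2T : mdot (f2 v) (f1 v) = 0 := by
    have q1 := Q1 v hv; simp only [mdot] at q1 ⊢; linarith
  have hD3F : mdot (f3 v) (f v) = 0 := by
    have p3 := P3 v hv; have q1 := Q1 v hv
    simp only [mdot] at p3 q1 ⊢; linarith
  have hD3T : mdot (f3 v) (f1 v) + mdot (f2 v) (f2 v) = 0 := by
    have q2 := Q2 v hv; simp only [mdot] at q2 ⊢; linarith
  have hD4F : mdot (f4 v) (f v) = mdot (f2 v) (f2 v) := by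
    have p4 := P4; have q2 := Q2 v hv
    simp only [mdot] at p4 q2 ⊢; linarith
  have hD4T : mdot (f4 v) (f1 v) + 3 * mdot (f3 v) (f2 v) = 0 := by
    have q3 := Q3; simp only [mdot] at q3 ⊢; linarith
  -- rewrite the goal and apply the key algebraic lemma
  rw [e1 v hv, e2 v hv, e3 v hv, e4, ek1 v hv, ek2, hs']
  simp only [hkg']
  exact key (f v) (f1 v) (f2 v) (f3 v) (f4 v) u hFF hTT hFT hD2F hD2T hD3F hD3T hD4F hD4T hu
    _ _ _ rfl (by simp only [det3]; ring) (by simp only [det3]; ring)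
end
end

section
/- Let f : I → ℝ³ be a unit speed timelike curve on S²₁ and let d_f(v) = (κ_g(v)f(v) − s(v))/√(κ_g(v)² + 1) be its pseudo-spherical evolute. Then for all v ∈ I, d_f'(v) = κ_g'(v)·(f(v) + κ_g(v)s(v))/(κ_g(v)² + 1)^{3/2}; in particular, d_f'(v) = 0 if and only if κ_g'(v) = 0. -/
noncomputable section

lemma frenet_alg (F T U : Fin 3 → ℝ) (h1 : mdot F F = 1) (h2 : mdot T T = -1)
    (h3 : mdot F T = 0) (h4 : mdot F U = 1) (h5 : mdot T U = 0) :
    U = F + (det3 F T U) • lcross F T := by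
  simp only [mdot] at h1 h2 h3 h4 h5
  have hss : (F 1 * T 2 - F 2 * T 1) * (F 1 * T 2 - F 2 * T 1)
      + (F 2 * T 0 - F 0 * T 2) * (F 2 * T 0 - F 0 * T 2)
      - (F 1 * T 0 - F 0 * T 1) * (F 1 * T 0 - F 0 * T 1) = 1 := by
    linear_combination (F 0 * T 0 + F 1 * T 1 - F 2 * T 2) * h3 - (T 0 * T 0 + T 1 * T 1 - T 2 * T 2) * h1 - h2
  have hk : det3 F T U = (F 1 * T 2 - F 2 * T 1) * U 0 + (F 2 * T 0 - F 0 * T 2) * U 1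
      - (F 1 * T 0 - F 0 * T 1) * U 2 := by simp only [det3]; ring
  have e0 : U 0 = F 0 + det3 F T U * (F 1 * T 2 - F 2 * T 1) := by
    rw [hk]
    linear_combination (-(U 0 - F 0 - ((F 1 * T 2 - F 2 * T 1) * U 0 + (F 2 * T 0 - F 0 * T 2) * U 1 - (F 1 * T 0 - F 0 * T 1) * U 2) * (F 1 * T 2 - F 2 * T 1)) + (-(F 1) * T 2 + F 2 * T 1) * ((F 1 * T 2 - F 2 * T 1) * U 0 + (F 2 * T 0 - F 0 * T 2) * U 1 - (F 1 * T 0 - F 0 * T 1) * U 2)) * hss - (-(T 1) * (F 1 * T 0 - F 0 * T 1) + T 2 * (F 2 * T 0 - F 0 * T 2)) * h4 + (-(T 1) * (F 1 * T 0 - F 0 * T 1) + T 2 * (F 2 * T 0 - F 0 * T 2)) * h1 - (F 1 * (F 1 * T 0 - F 0 * T 1) - F 2 * (F 2 * T 0 - F 0 * T 2)) * h5 + (F 1 * (F 1 * T 0 - F 0 * T 1) - F 2 * (F 2 * T 0 - F 0 * T 2)) * h3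
  have e1 : U 1 = F 1 + det3 F T U * (F 2 * T 0 - F 0 * T 2) := by
    rw [hk]
    linear_combination (-(U 1 - F 1 - ((F 1 * T 2 - F 2 * T 1) * U 0 + (F 2 * T 0 - F 0 * T 2) * U 1 - (F 1 * T 0 - F 0 * T 1) * U 2) * (F 2 * T 0 - F 0 * T 2)) + (F 0 * T 2 - F 2 * T 0) * ((F 1 * T 2 - F 2 * T 1) * U 0 + (F 2 * T 0 - F 0 * T 2) * U 1 - (F 1 * T 0 - F 0 * T 1) * U 2)) * hss - (T 0 * (F 1 * T 0 - F 0 * T 1) - T 2 * (F 1 * T 2 - F 2 * T 1)) * h4 + (T 0 * (F 1 * T 0 - F 0 * T 1) - T 2 * (F 1 * T 2 - F 2 * T 1)) * h1 - (-(F 0) * (F 1 * T 0 - F 0 * T 1) + F 2 * (F 1 * T 2 - F 2 * T 1)) * h5 + (-(F 0) * (F 1 * T 0 - F 0 * T 1) + F 2 * (F 1 * T 2 - F 2 * T 1)) * h3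
  have e2 : U 2 = F 2 + det3 F T U * (F 1 * T 0 - F 0 * T 1) := by
    rw [hk]
    linear_combination (-(U 2 - F 2 - ((F 1 * T 2 - F 2 * T 1) * U 0 + (F 2 * T 0 - F 0 * T 2) * U 1 - (F 1 * T 0 - F 0 * T 1) * U 2) * (F 1 * T 0 - F 0 * T 1)) + (F 0 * T 1 - F 1 * T 0) * ((F 1 * T 2 - F 2 * T 1) * U 0 + (F 2 * T 0 - F 0 * T 2) * U 1 - (F 1 * T 0 - F 0 * T 1) * U 2)) * hss - (T 0 * (F 2 * T 0 - F 0 * T 2) - T 1 * (F 1 * T 2 - F 2 * T 1)) * h4 + (T 0 * (F 2 * T 0 - F 0 * T 2) - T 1 * (F 1 * T 2 - F 2 * T 1)) * h1 - (-(F 0 * (F 2 * T 0 - F 0 * T 2) - F 1 * (F 1 * T 2 - F 2 * T 1))) * h5 + (-(F 0 * (F 2 * T 0 - F 0 * T 2) - F 1 * (F 1 * T 2 - F 2 * T 1))) * h3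
  funext i
  fin_cases i <;>
    simp only [Pi.add_apply, Pi.smul_apply, smul_eq_mul, lcross,
      Matrix.cons_val_zero, Matrix.cons_val_one, Matrix.head_cons, Matrix.cons_val_two,
      Matrix.tail_cons, Fin.isValue]
  · exact e0
  · exact e1
  · exact e2

/-- The derivative of the pseudo-spherical evolute d_f = (κ_g f − s)/√(κ_g² + 1) of a unit
speed timelike curve f on S²₁ is d_f' = κ_g'·(f + κ_g s)/(κ_g² + 1)^{3/2}; in particular
d_f'(v) = 0 iff κ_g'(v) = 0. -/
theorem stmt_6 (a b : ℝ) (f : ℝ → Fin 3 → ℝ)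
    (hf : ContDiffOn ℝ (⊤ : ℕ∞) f (Set.Ioo a b))
    (hsph : ∀ v ∈ Set.Ioo a b, mdot (f v) (f v) = 1)
    (htl : ∀ v ∈ Set.Ioo a b, mdot (deriv f v) (deriv f v) = -1)
    (t s : ℝ → Fin 3 → ℝ) (kg : ℝ → ℝ)
    (ht : t = fun w => deriv f w)
    (hs : s = fun w => lcross (f w) (t w))
    (hkg : kg = fun w => det3 (f w) (t w) (deriv t w))
    (d : ℝ → Fin 3 → ℝ)
    (hd : d = fun w => (Real.sqrt (kg w ^ 2 + 1))⁻¹ • (kg w • f w - s w)) :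
    ∀ v ∈ Set.Ioo a b,
      deriv d v = (deriv kg v / Real.sqrt (kg v ^ 2 + 1) ^ 3) • (f v + kg v • s v) ∧
      (deriv d v = 0 ↔ deriv kg v = 0) := by
  intro v hv
  have hO : IsOpen (Set.Ioo a b) := isOpen_Ioo
  -- smoothness of t and deriv t
  have htf : ContDiffOn ℝ (⊤ : ℕ∞) t (Set.Ioo a b) := by
    rw [ht]; exact hf.deriv_of_isOpen hO (by simp)
  have ht'f : ContDiffOn ℝ (⊤ : ℕ∞) (deriv t) (Set.Ioo a b) := htf.deriv_of_isOpen hO (by simp)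
  -- pointwise derivatives
  have hfd : ∀ w ∈ Set.Ioo a b, HasDerivAt f (t w) w := by
    intro w hw
    have := ((hf.contDiffAt (hO.mem_nhds hw)).differentiableAt (by simp)).hasDerivAt
    rw [ht]; exact this
  have htd : ∀ w ∈ Set.Ioo a b, HasDerivAt t (deriv t w) w := fun w hw =>
    ((htf.contDiffAt (hO.mem_nhds hw)).differentiableAt (by simp)).hasDerivAt
  have ht'd : HasDerivAt (deriv t) (deriv (deriv t) v) v :=
    ((ht'f.contDiffAt (hO.mem_nhds hv)).differentiableAt (by simp)).hasDerivAt
  have hfiw : ∀ w ∈ Set.Ioo a b, ∀ i, HasDerivAt (fun u => f u i) (t w i) w := fun w hw i =>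
    hasDerivAt_pi.1 (hfd w hw) i
  have htiw : ∀ w ∈ Set.Ioo a b, ∀ i, HasDerivAt (fun u => t u i) (deriv t w i) w := fun w hw i =>
    hasDerivAt_pi.1 (htd w hw) i
  have hT'i : ∀ i, HasDerivAt (fun w => deriv t w i) (deriv (deriv t) v i) v := fun i =>
    hasDerivAt_pi.1 ht'd i
  have hfi : ∀ i, HasDerivAt (fun u => f u i) (t v i) v := hfiw v hv
  have hti : ∀ i, HasDerivAt (fun u => t u i) (deriv t v i) v := htiw v hv
  have htl' : ∀ w ∈ Set.Ioo a b, mdot (t w) (t w) = -1 := by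
    intro w hw; rw [ht]; exact htl w hw
  -- ⟪f, t⟫ = 0 on the interval
  have orth_ft : ∀ w ∈ Set.Ioo a b, mdot (f w) (t w) = 0 := by
    intro w hw
    have hp : HasDerivAt (fun u => f u 0 * f u 0 + f u 1 * f u 1 - f u 2 * f u 2)
        ((t w 0 * f w 0 + f w 0 * t w 0) + (t w 1 * f w 1 + f w 1 * t w 1)
          - (t w 2 * f w 2 + f w 2 * t w 2)) w :=
      (((hfiw w hw 0).mul (hfiw w hw 0)).add ((hfiw w hw 1).mul (hfiw w hw 1))).sub
        ((hfiw w hw 2).mul (hfiw w hw 2))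
    have hev : (fun u => f u 0 * f u 0 + f u 1 * f u 1 - f u 2 * f u 2) =ᶠ[nhds w]
        (fun _ => (1:ℝ)) := by
      filter_upwards [hO.mem_nhds hw] with x hx
      have := hsph x hx
      simpa [mdot] using this
    have hp0 : HasDerivAt (fun u => f u 0 * f u 0 + f u 1 * f u 1 - f u 2 * f u 2) 0 w :=
      (hasDerivAt_const w (1:ℝ)).congr_of_eventuallyEq hev
    have huniq := hp.unique hp0
    simp only [mdot]; linarith
  -- ⟪t, t'⟫ = 0 at v
  have orth_tt' : mdot (t v) (deriv t v) = 0 := by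
    have hp : HasDerivAt (fun u => t u 0 * t u 0 + t u 1 * t u 1 - t u 2 * t u 2)
        ((deriv t v 0 * t v 0 + t v 0 * deriv t v 0) + (deriv t v 1 * t v 1 + t v 1 * deriv t v 1)
          - (deriv t v 2 * t v 2 + t v 2 * deriv t v 2)) v :=
      (((hti 0).mul (hti 0)).add ((hti 1).mul (hti 1))).sub ((hti 2).mul (hti 2))
    have hev : (fun u => t u 0 * t u 0 + t u 1 * t u 1 - t u 2 * t u 2) =ᶠ[nhds v]
        (fun _ => (-1:ℝ)) := by
      filter_upwards [hO.mem_nhds hv] with x hx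
      have := htl' x hx
      simpa [mdot] using this
    have hp0 : HasDerivAt (fun u => t u 0 * t u 0 + t u 1 * t u 1 - t u 2 * t u 2) 0 v :=
      (hasDerivAt_const v (-1:ℝ)).congr_of_eventuallyEq hev
    have huniq := hp.unique hp0
    simp only [mdot]; linarith
  -- ⟪f, t'⟫ = 1 at v
  have orth_ft' : mdot (f v) (deriv t v) = 1 := by
    have hp : HasDerivAt (fun u => f u 0 * t u 0 + f u 1 * t u 1 - f u 2 * t u 2)
        ((t v 0 * t v 0 + f v 0 * deriv t v 0) + (t v 1 * t v 1 + f v 1 * deriv t v 1)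
          - (t v 2 * t v 2 + f v 2 * deriv t v 2)) v :=
      (((hfi 0).mul (hti 0)).add ((hfi 1).mul (hti 1))).sub ((hfi 2).mul (hti 2))
    have hev : (fun u => f u 0 * t u 0 + f u 1 * t u 1 - f u 2 * t u 2) =ᶠ[nhds v]
        (fun _ => (0:ℝ)) := by
      filter_upwards [hO.mem_nhds hv] with x hx
      have := orth_ft x hx
      simpa [mdot] using this
    have hp0 : HasDerivAt (fun u => f u 0 * t u 0 + f u 1 * t u 1 - f u 2 * t u 2) 0 v :=
      (hasDerivAt_const v (0:ℝ)).congr_of_eventuallyEq hev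
    have huniq := hp.unique hp0
    have h2 := htl' v hv
    simp only [mdot] at h2 ⊢; linarith
  -- Frenet equation t' = f + κ_g s
  have hkgv : kg v = det3 (f v) (t v) (deriv t v) := by rw [hkg]
  have hsv : s v = lcross (f v) (t v) := by rw [hs]
  have hFrenet : deriv t v = f v + kg v • s v := by
    rw [hkgv, hsv]
    exact frenet_alg (f v) (t v) (deriv t v) (hsph v hv) (htl' v hv) (orth_ft v hv)
      orth_ft' orth_tt'
  have hT'c : ∀ i, deriv t v i = f v i + kg v * s v i := by
    intro i; rw [hFrenet]; rfl
  -- component facts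
  have h1c : f v 0 * f v 0 + f v 1 * f v 1 - f v 2 * f v 2 = 1 := by
    have := hsph v hv; simpa [mdot] using this
  have h2c : t v 0 * t v 0 + t v 1 * t v 1 - t v 2 * t v 2 = -1 := by
    have := htl' v hv; simpa [mdot] using this
  have h3c : f v 0 * t v 0 + f v 1 * t v 1 - f v 2 * t v 2 = 0 := by
    have := orth_ft v hv; simpa [mdot] using this
  have hsv0 : s v 0 = f v 1 * t v 2 - f v 2 * t v 1 := by rw [hsv]; simp [lcross]
  have hsv1 : s v 1 = f v 2 * t v 0 - f v 0 * t v 2 := by rw [hsv]; simp [lcross]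
  have hsv2 : s v 2 = f v 1 * t v 0 - f v 0 * t v 1 := by rw [hsv]; simp [lcross]
  -- derivative of s components : (s i)' = κ_g * t i
  have hsder : ∀ i, HasDerivAt (fun w => s w i) (kg v * t v i) v := by
    have hfun0 : (fun w => s w 0) = fun w => f w 1 * t w 2 - f w 2 * t w 1 := by
      funext w; rw [hs]; simp [lcross]
    have hfun1 : (fun w => s w 1) = fun w => f w 2 * t w 0 - f w 0 * t w 2 := by
      funext w; rw [hs]; simp [lcross]
    have hfun2 : (fun w => s w 2) = fun w => f w 1 * t w 0 - f w 0 * t w 1 := by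
      funext w; rw [hs]; simp [lcross]
    have r0 : HasDerivAt (fun w => s w 0)
        ((t v 1 * t v 2 + f v 1 * deriv t v 2) - (t v 2 * t v 1 + f v 2 * deriv t v 1)) v := by
      rw [hfun0]; exact ((hfi 1).mul (hti 2)).sub ((hfi 2).mul (hti 1))
    have r1 : HasDerivAt (fun w => s w 1)
        ((t v 2 * t v 0 + f v 2 * deriv t v 0) - (t v 0 * t v 2 + f v 0 * deriv t v 2)) v := by
      rw [hfun1]; exact ((hfi 2).mul (hti 0)).sub ((hfi 0).mul (hti 2))
    have r2 : HasDerivAt (fun w => s w 2)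
        ((t v 1 * t v 0 + f v 1 * deriv t v 0) - (t v 0 * t v 1 + f v 0 * deriv t v 1)) v := by
      rw [hfun2]; exact ((hfi 1).mul (hti 0)).sub ((hfi 0).mul (hti 1))
    have e0 : (t v 1 * t v 2 + f v 1 * deriv t v 2) - (t v 2 * t v 1 + f v 2 * deriv t v 1)
        = kg v * t v 0 := by
      simp only [hT'c, hsv0, hsv1, hsv2]
      linear_combination (kg v * t v 0) * h1c - (kg v * f v 0) * h3c
    have e1 : (t v 2 * t v 0 + f v 2 * deriv t v 0) - (t v 0 * t v 2 + f v 0 * deriv t v 2)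
        = kg v * t v 1 := by
      simp only [hT'c, hsv0, hsv1, hsv2]
      linear_combination (kg v * t v 1) * h1c - (kg v * f v 1) * h3c
    have e2 : (t v 1 * t v 0 + f v 1 * deriv t v 0) - (t v 0 * t v 1 + f v 0 * deriv t v 1)
        = kg v * t v 2 := by
      simp only [hT'c, hsv0, hsv1, hsv2]
      linear_combination (kg v * t v 2) * h1c - (kg v * f v 2) * h3c
    intro i
    fin_cases i
    · exact e0 ▸ r0
    · exact e1 ▸ r1
    · exact e2 ▸ r2
  -- kg is differentiable at v
  have hkdiff : DifferentiableAt ℝ kg v := by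
    rw [hkg]; simp only [det3]
    exact (((hfi 0).differentiableAt.mul (((hti 1).differentiableAt.mul
        (hT'i 2).differentiableAt).sub ((hti 2).differentiableAt.mul
        (hT'i 1).differentiableAt))).sub ((hfi 1).differentiableAt.mul
        (((hti 0).differentiableAt.mul (hT'i 2).differentiableAt).sub
        ((hti 2).differentiableAt.mul (hT'i 0).differentiableAt)))).add
        ((hfi 2).differentiableAt.mul (((hti 0).differentiableAt.mul
        (hT'i 1).differentiableAt).sub ((hti 1).differentiableAt.mul
        (hT'i 0).differentiableAt)))
  have hkD : HasDerivAt kg (deriv kg v) v := hkdiff.hasDerivAt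
  set N := Real.sqrt (kg v ^ 2 + 1) with hNdef
  have hNpos : 0 < N := Real.sqrt_pos.2 (by positivity)
  have hN2 : N ^ 2 = kg v ^ 2 + 1 := Real.sq_sqrt (by positivity)
  -- derivative of the sqrt factor
  have hu : HasDerivAt (fun w => kg w ^ 2 + 1) (2 * kg v * deriv kg v) v := by
    have := (hkD.pow 2).add_const 1
    convert this using 1 <;> try rfl
    simp
  have hsqrtd : HasDerivAt (fun w => Real.sqrt (kg w ^ 2 + 1)) (kg v * deriv kg v / N) v := by
    have hx : kg v ^ 2 + 1 ≠ 0 := by positivity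
    have := (Real.hasDerivAt_sqrt hx).comp v hu
    convert this using 1 <;> try rfl
    rw [← hNdef]; field_simp
  have hinv : HasDerivAt (fun w => (Real.sqrt (kg w ^ 2 + 1))⁻¹)
      (-(kg v * deriv kg v / N) / N ^ 2) v := hsqrtd.inv hNpos.ne'
  -- inner function derivative
  have hinner : ∀ i, HasDerivAt (fun w => kg w * f w i - s w i) (deriv kg v * f v i) v := by
    intro i
    have := (hkD.mul (hfi i)).sub (hsder i)
    convert this using 1 <;> try rfl
    ring
  -- the full derivative of d
  have hdD : HasDerivAt d ((deriv kg v / N ^ 3) • (f v + kg v • s v)) v := by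
    rw [hd]
    refine hasDerivAt_pi.2 fun i => ?_
    have hfun : (fun w => ((Real.sqrt (kg w ^ 2 + 1))⁻¹ • (kg w • f w - s w)) i)
        = fun w => (Real.sqrt (kg w ^ 2 + 1))⁻¹ * (kg w * f w i - s w i) := by
      funext w; simp [Pi.smul_apply, Pi.sub_apply]
    rw [show (fun w => ((fun w => (Real.sqrt (kg w ^ 2 + 1))⁻¹ • (kg w • f w - s w)) w) i)
        = fun w => (Real.sqrt (kg w ^ 2 + 1))⁻¹ * (kg w * f w i - s w i) from hfun]
    have hraw := hinv.mul (hinner i)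
    convert hraw using 1 <;> try rfl
    have hN3 : N ^ 3 ≠ 0 := by positivity
    simp only [Pi.smul_apply, Pi.add_apply, smul_eq_mul, ← hNdef]
    field_simp
    linear_combination (-(deriv kg v * f v i)) * hN2
  refine ⟨hdD.deriv, ?_⟩
  rw [hdD.deriv]
  -- the vector f + κ s is nonzero
  have hxne : f v + kg v • s v ≠ 0 := by
    intro h0
    have hmm : mdot (f v + kg v • s v) (f v + kg v • s v) = 1 + kg v ^ 2 := by
      simp only [mdot, Pi.add_apply, Pi.smul_apply, smul_eq_mul]
      rw [hsv0, hsv1, hsv2]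
      linear_combination h1c + (kg v)^2 * ((f v 0 * t v 0 + f v 1 * t v 1 - f v 2 * t v 2) * h3c
        - (t v 0 * t v 0 + t v 1 * t v 1 - t v 2 * t v 2) * h1c - h2c)
    rw [h0] at hmm
    simp only [mdot, Pi.zero_apply, mul_zero, zero_mul, add_zero, sub_zero, zero_add] at hmm
    nlinarith [sq_nonneg (kg v)]
  constructor
  · intro h
    rcases smul_eq_zero.1 h with hc | hxx
    · rcases div_eq_zero_iff.1 hc with h' | h'
      · exact h'
      · exact absurd h' (by positivity)
    · exact absurd hxx hxne
  · intro h
    rw [h]; simp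
end
end

section
/- Let f : I → ℝ³ be a unit speed timelike curve on S²₁ whose geodesic curvature κ_g is a constant c on I. Fix v₀ ∈ I and set u₀ = (c·f(v₀) − s(v₀))/√(c² + 1) and r = c/√(c² + 1). Then u₀ ∈ S²₁ and f lies entirely on the pseudo-circle PS¹(u₀, r), i.e. ⟪f(v), u₀⟫ = r for all v ∈ I. -/
noncomputable section

/-- Key algebraic lemma: from the Frenet-type scalar relations, `f ×ₗ t' = c • t`. -/
lemma key_alg (p q w : Fin 3 → ℝ) (c : ℝ)
    (h1 : mdot p p = 1) (h2 : mdot q q = -1) (h3 : mdot p q = 0)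
    (h5 : mdot w q = 0) (h6 : det3 p q w = c) :
    lcross p w = c • q := by
  simp only [mdot] at h1 h2 h3 h5
  simp only [det3] at h6
  funext i
  fin_cases i <;>
    simp only [lcross, Pi.smul_apply, smul_eq_mul, Matrix.cons_val_zero, Matrix.cons_val_one,
      Matrix.head_cons, Matrix.cons_val_two, Matrix.tail_cons, Fin.isValue, Fin.zero_eta, Fin.mk_one, Fin.reduceFinMk]
  · linear_combination (((p 1)*(w 2) - (p 2)*(w 1) - c * (q 0)) * (q 0*q 0 + q 1*q 1 - q 2*q 2)) * h1 + ((((p 1) * (((p 1) * (q 0)) - ((p 0) * (q 1)))) - ((p 2) * (((p 2) * (q 0)) - ((p 0) * (q 2))))) * c + ((p 1)*(w 2) - (p 2)*(w 1) - c * (q 0))) * h2 + ((((q 2) * (((p 2) * (q 0)) - ((p 0) * (q 2)))) - ((q 1) * (((p 1) * (q 0)) - ((p 0) * (q 1))))) * c - (((p 2) * (q 1)) - ((p 1) * (q 2))) * (w 0*p 0 + w 1*p 1 - w 2*p 2) - ((p 1)*(w 2) - (p 2)*(w 1) - c * (q 0)) * (p 0*q 0 + p 1*q 1 - p 2*q 2))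 * h3 + ((((p 2) * (q 1)) - ((p 1) * (q 2))) * (p 0*p 0 + p 1*p 1 - p 2*p 2)) * h5 + (((p 1) * (((p 1) * (q 0)) - ((p 0) * (q 1)))) - ((p 2) * (((p 2) * (q 0)) - ((p 0) * (q 2))))) * h6
  · linear_combination (((p 2)*(w 0) - (p 0)*(w 2) - c * (q 1)) * (q 0*q 0 + q 1*q 1 - q 2*q 2)) * h1 + ((((p 2) * (((p 1) * (q 2)) - ((p 2) * (q 1)))) - ((p 0) * (((p 1) * (q 0)) - ((p 0) * (q 1))))) * c + ((p 2)*(w 0) - (p 0)*(w 2) - c * (q 1))) * h2 + ((((q 0) * (((p 1) * (q 0)) - ((p 0) * (q 1)))) - ((q 2) * (((p 1) * (q 2)) - ((p 2) * (q 1))))) * c - (((p 0) * (q 2)) - ((p 2) * (q 0))) * (w 0*p 0 + w 1*p 1 - w 2*p 2) - ((p 2)*(w 0) - (p 0)*(w 2) - c * (q 1)) * (p 0*q 0 + p 1*q 1 - p 2*q 2)) * h3 + ((((p 0) * (q 2)) - ((p 2) * (q 0))) * (p 0*p 0 + p 1*p 1 - p 2*p 2)) * h5 + (((p 2) * (((p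 1) * (q 2)) - ((p 2) * (q 1)))) - ((p 0) * (((p 1) * (q 0)) - ((p 0) * (q 1))))) * h6
  · linear_combination (((p 1)*(w 0) - (p 0)*(w 1) - c * (q 2)) * (q 0*q 0 + q 1*q 1 - q 2*q 2)) * h1 + ((((p 1) * (((p 1) * (q 2)) - ((p 2) * (q 1)))) - ((p 0) * (((p 2) * (q 0)) - ((p 0) * (q 2))))) * c + ((p 1)*(w 0) - (p 0)*(w 1) - c * (q 2))) * h2 + ((((q 0) * (((p 2) * (q 0)) - ((p 0) * (q 2)))) - ((q 1) * (((p 1) * (q 2)) - ((p 2) * (q 1))))) * c - (((p 0) * (q 1)) - ((p 1) * (q 0))) * (w 0*p 0 + w 1*p 1 - w 2*p 2) - ((p 1)*(w 0) - (p 0)*(w 1) - c * (q 2)) * (p 0*q 0 + p 1*q 1 - p 2*q 2)) * h3 + ((((p 0) * (q 1)) - ((p 1) * (q 0))) * (p 0*p 0 + p 1*p 1 - p 2*p 2)) * h5 + (((p 1) * (((p 1) * (q 2)) - ((p 2) * (q 1)))) - ((p 0) * (((p 2) * (q 0)) - ((p 0) * (q 2))))) * h6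

lemma aux_GG (p q : Fin 3 → ℝ) (c : ℝ) (h1 : mdot p p = 1) (h2 : mdot q q = -1)
    (h3 : mdot p q = 0) :
    mdot (c • p - lcross p q) (c • p - lcross p q) = c ^ 2 + 1 := by
  simp only [mdot] at h1 h2 h3
  simp only [mdot, lcross, Pi.sub_apply, Pi.smul_apply, smul_eq_mul, Matrix.cons_val_zero,
    Matrix.cons_val_one, Matrix.head_cons, Matrix.cons_val_two, Matrix.tail_cons, Fin.isValue, Fin.zero_eta, Fin.mk_one, Fin.reduceFinMk]
  linear_combination (c ^ 2 - (q 0 * q 0 + q 1 * q 1 - q 2 * q 2)) * h1 - h2 +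
    (p 0 * q 0 + p 1 * q 1 - p 2 * q 2) * h3

lemma aux_fG (p q : Fin 3 → ℝ) (c : ℝ) (h1 : mdot p p = 1) :
    mdot p (c • p - lcross p q) = c := by
  simp only [mdot] at h1
  simp only [mdot, lcross, Pi.sub_apply, Pi.smul_apply, smul_eq_mul, Matrix.cons_val_zero,
    Matrix.cons_val_one, Matrix.head_cons, Matrix.cons_val_two, Matrix.tail_cons, Fin.isValue, Fin.zero_eta, Fin.mk_one, Fin.reduceFinMk]
  linear_combination c * h1

lemma aux_scale (k : ℝ) (x y : Fin 3 → ℝ) : mdot (k • x) (k • y) = k ^ 2 * mdot x y := by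
  simp only [mdot, Pi.smul_apply, smul_eq_mul]; ring

lemma aux_scale' (k : ℝ) (x y : Fin 3 → ℝ) : mdot x (k • y) = k * mdot x y := by
  simp only [mdot, Pi.smul_apply, smul_eq_mul]; ring

/-- If the geodesic curvature of a unit speed timelike curve f on S²₁ is a constant c,
then with u₀ = (c·f(v₀) − s(v₀))/√(c² + 1) and r = c/√(c² + 1), u₀ ∈ S²₁ and f lies on
the pseudo-circle PS¹(u₀, r): ⟪f(v), u₀⟫ = r for all v ∈ I. -/
theorem stmt_7 (a b : ℝ) (f : ℝ → Fin 3 → ℝ)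
    (hf : ContDiffOn ℝ (⊤ : ℕ∞) f (Set.Ioo a b))
    (hsph : ∀ v ∈ Set.Ioo a b, mdot (f v) (f v) = 1)
    (htl : ∀ v ∈ Set.Ioo a b, mdot (deriv f v) (deriv f v) = -1)
    (t s : ℝ → Fin 3 → ℝ) (kg : ℝ → ℝ)
    (ht : t = fun w => deriv f w)
    (hs : s = fun w => lcross (f w) (t w))
    (hkg : kg = fun w => det3 (f w) (t w) (deriv t w))
    (c : ℝ) (hconst : ∀ v ∈ Set.Ioo a b, kg v = c)
    (v₀ : ℝ) (hv₀ : v₀ ∈ Set.Ioo a b)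
    (u₀ : Fin 3 → ℝ) (hu₀ : u₀ = (Real.sqrt (c ^ 2 + 1))⁻¹ • (c • f v₀ - s v₀))
    (r : ℝ) (hr : r = c / Real.sqrt (c ^ 2 + 1)) :
    mdot u₀ u₀ = 1 ∧ ∀ v ∈ Set.Ioo a b, mdot (f v) u₀ = r := by
  subst ht hs hkg hu₀ hr
  have hIo : IsOpen (Set.Ioo a b) := isOpen_Ioo
  have hf1 : DifferentiableOn ℝ f (Set.Ioo a b) := hf.differentiableOn (by simp)
  have hf2 : DifferentiableOn ℝ (deriv f) (Set.Ioo a b) :=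
    (hf.deriv_of_isOpen (m := 1) hIo (WithTop.coe_le_coe.2 le_top)).differentiableOn one_ne_zero
  have hFc : ∀ v ∈ Set.Ioo a b, ∀ i, HasDerivAt (fun x => f x i) (deriv f v i) v :=
    fun v hv i => hasDerivAt_pi.1 ((hf1.differentiableAt (hIo.mem_nhds hv)).hasDerivAt) i
  have hWc : ∀ v ∈ Set.Ioo a b, ∀ i,
      HasDerivAt (fun x => deriv f x i) (deriv (deriv f) v i) v :=
    fun v hv i => hasDerivAt_pi.1 ((hf2.differentiableAt (hIo.mem_nhds hv)).hasDerivAt) i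
  -- ⟪f, t⟫ = 0 on Ioo
  have h3 : ∀ v ∈ Set.Ioo a b, mdot (f v) (deriv f v) = 0 := by
    intro v hv
    have hA : HasDerivAt (fun x => f x 0 * f x 0 + f x 1 * f x 1 - f x 2 * f x 2)
        ((deriv f v 0 * f v 0 + f v 0 * deriv f v 0 +
          (deriv f v 1 * f v 1 + f v 1 * deriv f v 1)) -
          (deriv f v 2 * f v 2 + f v 2 * deriv f v 2)) v :=
      (((hFc v hv 0).mul (hFc v hv 0)).add ((hFc v hv 1).mul (hFc v hv 1))).sub
        ((hFc v hv 2).mul (hFc v hv 2))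
    have heq : (fun x => f x 0 * f x 0 + f x 1 * f x 1 - f x 2 * f x 2)
        =ᶠ[nhds v] fun _ => (1 : ℝ) := by
      filter_upwards [hIo.mem_nhds hv] with x hx
      simpa [mdot] using hsph x hx
    have hB : HasDerivAt (fun x => f x 0 * f x 0 + f x 1 * f x 1 - f x 2 * f x 2) 0 v :=
      (hasDerivAt_const v (1 : ℝ)).congr_of_eventuallyEq heq
    have h0 := hB.unique hA
    simp only [mdot]
    linarith
  -- ⟪t', t⟫ = 0 on Ioo
  have h5 : ∀ v ∈ Set.Ioo a b, mdot (deriv (deriv f) v) (deriv f v) = 0 := by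
    intro v hv
    have hA : HasDerivAt
        (fun x => deriv f x 0 * deriv f x 0 + deriv f x 1 * deriv f x 1 -
          deriv f x 2 * deriv f x 2)
        ((deriv (deriv f) v 0 * deriv f v 0 + deriv f v 0 * deriv (deriv f) v 0 +
          (deriv (deriv f) v 1 * deriv f v 1 + deriv f v 1 * deriv (deriv f) v 1)) -
          (deriv (deriv f) v 2 * deriv f v 2 + deriv f v 2 * deriv (deriv f) v 2)) v :=
      (((hWc v hv 0).mul (hWc v hv 0)).add ((hWc v hv 1).mul (hWc v hv 1))).sub
        ((hWc v hv 2).mul (hWc v hv 2))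
    have heq : (fun x => deriv f x 0 * deriv f x 0 + deriv f x 1 * deriv f x 1 -
        deriv f x 2 * deriv f x 2) =ᶠ[nhds v] fun _ => (-1 : ℝ) := by
      filter_upwards [hIo.mem_nhds hv] with x hx
      simpa [mdot] using htl x hx
    have hB : HasDerivAt (fun x => deriv f x 0 * deriv f x 0 + deriv f x 1 * deriv f x 1 -
        deriv f x 2 * deriv f x 2) 0 v :=
      (hasDerivAt_const v (-1 : ℝ)).congr_of_eventuallyEq heq
    have h0 := hB.unique hA
    simp only [mdot]
    linarith
  -- the key vector identity
  have hK : ∀ v ∈ Set.Ioo a b,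
      lcross (f v) (deriv (deriv f) v) = c • deriv f v := by
    intro v hv
    have h6 : det3 (f v) (deriv f v) (deriv (deriv f) v) = c := by
      have := hconst v hv
      simpa using this
    exact key_alg _ _ _ c (hsph v hv) (htl v hv) (h3 v hv) (h5 v hv) h6
  -- the center vector G is constant on Ioo
  obtain ⟨G, hGdef⟩ : ∃ G : ℝ → Fin 3 → ℝ,
      G = fun x => c • f x - lcross (f x) (deriv f x) := ⟨_, rfl⟩
  have hDG : ∀ v ∈ Set.Ioo a b, HasDerivAt G 0 v := by
    intro v hv
    have hD : HasDerivAt G (c • deriv f v - lcross (f v) (deriv (deriv f) v)) v := by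
      refine hasDerivAt_pi.2 fun i => ?_
      fin_cases i <;>
        simp only [hGdef, lcross, Pi.sub_apply, Pi.smul_apply, smul_eq_mul,
          Matrix.cons_val_zero, Matrix.cons_val_one, Matrix.head_cons, Matrix.cons_val_two,
          Matrix.tail_cons, Fin.isValue, Fin.zero_eta, Fin.mk_one, Fin.reduceFinMk]
      · have h := ((hFc v hv 0).const_mul c).sub
          (((hFc v hv 1).mul (hWc v hv 2)).sub ((hFc v hv 2).mul (hWc v hv 1)))
        convert h using 1 <;> first | rfl | ring
      · have h := ((hFc v hv 1).const_mul c).sub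
          (((hFc v hv 2).mul (hWc v hv 0)).sub ((hFc v hv 0).mul (hWc v hv 2)))
        convert h using 1 <;> first | rfl | ring
      · have h := ((hFc v hv 2).const_mul c).sub
          (((hFc v hv 1).mul (hWc v hv 0)).sub ((hFc v hv 0).mul (hWc v hv 1)))
        convert h using 1 <;> first | rfl | ring
    rw [hK v hv] at hD
    simpa using hD
  have hGc : ∀ v ∈ Set.Ioo a b, G v = G v₀ := by
    intro v hv
    have hb := Convex.norm_image_sub_le_of_norm_hasDerivWithin_le (C := 0)
      (f' := fun _ => (0 : Fin 3 → ℝ))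
      (fun x hx => (hDG x hx).hasDerivWithinAt) (fun x _ => by simp) (convex_Ioo a b) hv₀ hv
    have : ‖G v - G v₀‖ ≤ 0 := by simpa using hb
    exact sub_eq_zero.1 (norm_le_zero_iff.1 this)
  have hpos : (0 : ℝ) < c ^ 2 + 1 := by positivity
  have hsq : Real.sqrt (c ^ 2 + 1) ^ 2 = c ^ 2 + 1 := Real.sq_sqrt hpos.le
  constructor
  · have hGG : mdot (G v₀) (G v₀) = c ^ 2 + 1 := by
      rw [hGdef]
      exact aux_GG _ _ c (hsph v₀ hv₀) (htl v₀ hv₀) (h3 v₀ hv₀)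
    have : mdot ((Real.sqrt (c ^ 2 + 1))⁻¹ • G v₀) ((Real.sqrt (c ^ 2 + 1))⁻¹ • G v₀) = 1 := by
      rw [aux_scale, hGG, inv_pow, hsq, inv_mul_cancel₀ hpos.ne']
    simpa [hGdef] using this
  · intro v hv
    have hfv : mdot (f v) (G v) = c := by
      rw [hGdef]
      exact aux_fG _ _ c (hsph v hv)
    have : mdot (f v) ((Real.sqrt (c ^ 2 + 1))⁻¹ • G v₀) = c / Real.sqrt (c ^ 2 + 1) := by
      rw [aux_scale', ← hGc v hv, hfv, div_eq_mul_inv, mul_comm]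
    simpa [hGdef] using this
end
end
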